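/- For every integer j > 1, the prism graph C_{4j} □ K_2 admits an efficient total coloring with 4 colors, i.e., a proper total coloring using colors {0,1,2,3} whose four vertex color classes are each efficient dominating sets. -/

import Mathlib

/-
The map `(i, k) ↦ (i mod 4, k)` is a covering of graphs `C_{4j} □ K_2 → C_4 □ K_2`: it maps the
neighbourhood of every vertex bijectively onto the neighbourhood of its image. Proper total
colourings and efficient dominating sets both pull back along coverings, since all their
conditions are local. It therefore suffices to colour the cube `C_4 □ K_2` once and for all:
vertex `(a, k)` gets colour `a + 2k` (mod 4), so the colour classes are the four antipodal pairs,
and the remaining conditions on this one small graph are checked by finite computation.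
-/

def IsEDS {V : Type*} (G : SimpleGraph V) (S : Set V) : Prop :=
  (∀ v ∈ S, ∀ w ∈ S, ¬ G.Adj v w) ∧ ∀ v ∉ S, ∃! w, w ∈ S ∧ G.Adj v w

def IsTC {V : Type*} (G : SimpleGraph V) (n : ℕ) (cv : V → ℕ) (ce : V → V → ℕ) : Prop :=
  (∀ v, cv v < n) ∧ (∀ u v, G.Adj u v → ce u v < n) ∧
  (∀ u v, G.Adj u v → ce u v = ce v u) ∧
  (∀ u v, G.Adj u v → cv u ≠ cv v) ∧
  (∀ u v, G.Adj u v → ce u v ≠ cv u ∧ ce u v ≠ cv v) ∧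
  (∀ u v w, G.Adj u v → G.Adj u w → v ≠ w → ce u v ≠ ce u w)

/-- The prism over the cycle `C_n`, i.e. `C_n □ K_2`. -/
def prism (n : ℕ) : SimpleGraph (ZMod n × Fin 2) where
  Adj x y := (x.2 = y.2 ∧ x.1 ≠ y.1 ∧ (y.1 = x.1 + 1 ∨ x.1 = y.1 + 1)) ∨
    (x.1 = y.1 ∧ x.2 ≠ y.2)
  symm := by
    constructor
    intro x y h
    rcases h with ⟨h1, h2, h3⟩ | ⟨h1, h2⟩
    · exact Or.inl ⟨h1.symm, h2.symm, h3.symm⟩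
    · exact Or.inr ⟨h1.symm, h2.symm⟩
  loopless := by
    constructor
    intro x h
    rcases h with ⟨_, h2, _⟩ | ⟨_, h2⟩ <;> exact h2 rfl

def SimpleGraph.IsCovering {V W : Type*} (G : SimpleGraph V) (H : SimpleGraph W) (f : V → W) :
    Prop :=
  ∀ v, Set.BijOn f (G.neighborSet v) (H.neighborSet (f v))

open SimpleGraph

section Covering

variable {V W : Type*} {G : SimpleGraph V} {H : SimpleGraph W} {f : V → W}

theorem SimpleGraph.IsCovering.adj (hf : IsCovering G H f) {u v : V} (huv : G.Adj u v) :
    H.Adj (f u) (f v) :=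
  (hf u).mapsTo huv

theorem IsTC.comap (hf : IsCovering G H f) {m : ℕ} {cv : W → ℕ} {ce : W → W → ℕ}
    (h : IsTC H m cv ce) : IsTC G m (cv ∘ f) (fun u v => ce (f u) (f v)) := by
  obtain ⟨hcv, hce, hsymm, hproper, hendpoint, hincident⟩ := h
  exact ⟨fun v => hcv (f v), fun u v huv => hce _ _ (hf.adj huv),
    fun u v huv => hsymm _ _ (hf.adj huv), fun u v huv => hproper _ _ (hf.adj huv),
    fun u v huv => hendpoint _ _ (hf.adj huv), fun u v w huv huw hvw =>
      hincident _ _ _ (hf.adj huv) (hf.adj huw) ((hf u).injOn.ne huv huw hvw)⟩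

theorem IsEDS.preimage (hf : IsCovering G H f) {S : Set W} (hS : IsEDS H S) :
    IsEDS G (f ⁻¹' S) := by
  obtain ⟨hindep, hdom⟩ := hS
  refine ⟨fun v hv w hw hvw => hindep _ hv _ hw (hf.adj hvw), fun v hv => ?_⟩
  obtain ⟨_, ⟨hzS, hvz⟩, hunique⟩ := hdom (f v) hv
  obtain ⟨w, hvw, rfl⟩ := (hf v).surjOn hvz
  exact ⟨w, ⟨hzS, hvw⟩, fun w' ⟨hw'S, hvw'⟩ =>
    (hf v).injOn hvw' hvw (hunique _ ⟨hw'S, hf.adj hvw'⟩)⟩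

end Covering

theorem ZMod.natCast_ne_zero_of_lt {m a : ℕ} (ha : 0 < a) (h : a < m) : (a : ZMod m) ≠ 0 :=
  (ZMod.natCast_eq_zero_iff a m).not.mpr (Nat.not_dvd_of_pos_of_lt ha h)

theorem prism_neighborSet {n : ℕ} (h : (1 : ZMod n) ≠ 0) (i : ZMod n) (k : Fin 2) :
    (prism n).neighborSet (i, k) = {(i + 1, k), (i - 1, k), (i, 1 - k)} := by
  have hflip : ∀ k' : Fin 2, k ≠ k' ↔ k' = 1 - k := by omega
  ext ⟨i', k'⟩
  simp only [mem_neighborSet, prism, Set.mem_insert_iff, Set.mem_singleton_iff, Prod.mk.injEq,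
    hflip, eq_sub_iff_add_eq]
  have hsucc : ∀ x : ZMod n, x ≠ x + 1 := fun x => by simpa using h
  constructor
  · rintro (⟨rfl, -, rfl | rfl⟩ | ⟨rfl, hk⟩)
    · exact .inl ⟨rfl, rfl⟩
    · exact .inr (.inl ⟨rfl, rfl⟩)
    · exact .inr (.inr ⟨rfl, hk⟩)
  · rintro (⟨rfl, rfl⟩ | ⟨rfl, rfl⟩ | ⟨rfl, hk⟩)
    · exact .inl ⟨rfl, hsucc i, .inl rfl⟩
    · exact .inl ⟨rfl, (hsucc i').symm, .inr rfl⟩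
    · exact .inr ⟨rfl, hk⟩

theorem isCovering_prism_map_cast {m n : ℕ} (hmn : m ∣ n) (hm : 2 < m) :
    IsCovering (prism n) (prism m) (Prod.map ZMod.cast id) := by
  have h1m : (1 : ZMod m) ≠ 0 := by exact_mod_cast ZMod.natCast_ne_zero_of_lt one_pos (by omega)
  have h2m : (2 : ZMod m) ≠ 0 := by exact_mod_cast ZMod.natCast_ne_zero_of_lt two_pos hm
  have h1n : (1 : ZMod n) ≠ 0 := fun h => h1m (by rw [← ZMod.cast_one hmn, h, ZMod.cast_zero])
  rintro ⟨i, k⟩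
  have himage : Prod.map ZMod.cast id '' {(i + 1, k), (i - 1, k), (i, 1 - k)} =
      ({(i.cast + 1, k), (i.cast - 1, k), (i.cast, 1 - k)} : Set (ZMod m × Fin 2)) := by
    simp only [Set.image_insert_eq, Set.image_singleton, Prod.map_apply, id, ZMod.cast_add hmn,
      ZMod.cast_sub hmn, ZMod.cast_one hmn]
  rw [prism_neighborSet h1n, Prod.map_apply, id, prism_neighborSet h1m, ← himage]
  refine Set.InjOn.bijOn_image ?_
  have hpm : (i.cast : ZMod m) + 1 ≠ i.cast - 1 := fun h => h2m (by linear_combination h)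
  have hflip : k ≠ 1 - k := by omega
  rintro x hx y hy hxy
  simp only [Set.mem_insert_iff, Set.mem_singleton_iff] at hx hy
  rcases hx with rfl | rfl | rfl <;> rcases hy with rfl | rfl | rfl <;>
    first | rfl | simp [ZMod.cast_add hmn, ZMod.cast_sub hmn, ZMod.cast_one hmn, hpm, hpm.symm,
      hflip, hflip.symm] at hxy

instance (n : ℕ) : DecidableRel (prism n).Adj := fun _ _ => by unfold prism; infer_instance

def cubeVertexColor (v : ZMod 4 × Fin 2) : ℕ := (v.1 + 2 * v.2.val : ZMod 4).val

def cubeEdgeColor (u v : ZMod 4 × Fin 2) : ℕ :=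
  (if u.2 ≠ v.2 then u.1 + 3 else if v.1 = u.1 + 1 then u.1 + 2 - u.2.val
    else v.1 + 2 - v.2.val : ZMod 4).val

theorem isTC_cube : IsTC (prism 4) 4 cubeVertexColor cubeEdgeColor := by
  refine ⟨?_, ?_, ?_, ?_, ?_, ?_⟩ <;> decide

set_option synthInstance.maxSize 1000 in
theorem isEDS_cube : ∀ c < 4, IsEDS (prism 4) {v | cubeVertexColor v = c} := by
  unfold IsEDS ExistsUnique
  decide

theorem stmt5_general (j : ℕ) :
    ∃ (cv : ZMod (4 * j) × Fin 2 → ℕ)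
      (ce : (ZMod (4 * j) × Fin 2) → (ZMod (4 * j) × Fin 2) → ℕ),
      IsTC (prism (4 * j)) 4 cv ce ∧
      ∀ c < 4, IsEDS (prism (4 * j)) {v | cv v = c} := by
  have hcover := isCovering_prism_map_cast (dvd_mul_right 4 j) (by norm_num)
  exact ⟨_, _, isTC_cube.comap hcover, fun c hc => (isEDS_cube c hc).preimage hcover⟩

theorem stmt5 (j : ℕ) (hj : 1 < j) :
    ∃ (cv : ZMod (4 * j) × Fin 2 → ℕ)
      (ce : (ZMod (4 * j) × Fin 2) → (ZMod (4 * j) × Fin 2) → ℕ),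
      IsTC (prism (4 * j)) 4 cv ce ∧
      ∀ c < 4, IsEDS (prism (4 * j)) {v | cv v = c} :=
  stmt5_general j
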